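/- Every countably supported probability distribution μ on a set X can be written as μ = Σ_{i≥1} 2^{-i} ν_i where each ν_i is a finitary dyadic distribution (finitely supported, with all weights of the form k/2^n). Moreover the ν_i can be chosen so that at each stage, (1/2)ν_i is strictly below the remaining measure on its support, and the construction can be made canonical given a total order on X. -/

import Mathlib

open scoped ENNReal

/-- A finitary dyadic distribution: finitely supported, all weights of the form
`k/2^n`. -/
def FinitaryDyadic {X : Type} (ν : PMF X) : Prop :=
  ν.support.Finite ∧ ∀ x, ∃ k n : ℕ, ν x = (k : ℝ≥0∞) / 2 ^ n

lemma greedy {X : Type} (c : X → ℕ) (S : Finset X) :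
    ∀ N : ℕ, N ≤ ∑ x ∈ S, c x → ∃ q : X → ℕ, (∀ x, q x ≤ c x) ∧ ∑ x ∈ S, q x = N := by
  classical
  induction S using Finset.induction_on with
  | empty => intro N hN; simp at hN; exact ⟨fun _ => 0, fun _ => Nat.zero_le _, by simp [hN]⟩
  | insert _ _ ha ih =>
    rename_i a S
    intro N hN
    rw [Finset.sum_insert ha] at hN
    by_cases h : N ≤ ∑ x ∈ S, c x
    · obtain ⟨q, hq, hs⟩ := ih N h
      refine ⟨fun x => if x = a then 0 else q x, fun x => ?_, ?_⟩
      · dsimp only; split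
        · exact Nat.zero_le _
        · exact hq x
      · rw [Finset.sum_insert ha, if_pos rfl,
          Finset.sum_congr rfl fun x hx => if_neg (by rintro rfl; exact ha hx)]
        simpa using hs
    · refine ⟨fun x => if x = a then N - ∑ x ∈ S, c x else c x, fun x => ?_, ?_⟩
      · dsimp only; split
        · next heq => subst heq; omega
        · exact le_rfl
      · rw [Finset.sum_insert ha, if_pos rfl,
          Finset.sum_congr rfl fun x hx => if_neg (by rintro rfl; exact ha hx)]
        exact Nat.sub_add_cancel (Nat.le_of_not_le h)

lemma exists_dyadic {X : Type} (μ : PMF X) :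
    ∃ ν : PMF X, FinitaryDyadic ν ∧ ∀ x, ν x ≠ 0 → ν x / 2 < μ x := by
  classical
  by_cases hbig : ∃ x0, 1 / 2 < μ x0
  · obtain ⟨x0, hx0⟩ := hbig
    refine ⟨PMF.pure x0, ⟨?_, ?_⟩, ?_⟩
    · rw [PMF.support_pure]; exact Set.finite_singleton x0
    · intro x
      by_cases h : x = x0
      · exact ⟨1, 0, by simp [PMF.pure_apply, h]⟩
      · exact ⟨0, 0, by simp [PMF.pure_apply, h]⟩
    · intro x hx
      rw [PMF.pure_apply] at hx ⊢
      rcases eq_or_ne x x0 with rfl | h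
      · rw [if_pos rfl]; exact hx0
      · exact absurd (if_neg h) hx
  · push_neg at hbig
    have hfin : ∀ x, μ x ≠ ∞ := fun x =>
      ne_top_of_le_ne_top ENNReal.one_ne_top (μ.coe_le_one x)
    have h1 : (1 / 2 : ℝ≥0∞) < ∑' x, μ x := by
      rw [μ.tsum_coe]
      norm_num
    rw [ENNReal.tsum_eq_iSup_sum] at h1
    obtain ⟨S, hS⟩ := lt_iSup_iff.mp h1
    set T := S.filter (fun x => μ x ≠ 0) with hT_def
    have hT : (1 / 2 : ℝ≥0∞) < ∑ x ∈ T, μ x := by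
      rwa [hT_def, Finset.sum_filter_ne_zero]
    have hTfin : ∑ x ∈ T, μ x ≠ ∞ := by
      exact (ENNReal.sum_lt_top.mpr fun a _ => (hfin a).lt_top).ne
    set r : X → ℝ := fun x => (μ x).toReal with hr_def
    have hrpos : ∀ x ∈ T, 0 < r x := by
      intro x hx
      exact ENNReal.toReal_pos (Finset.mem_filter.mp hx).2 (hfin x)
    have hrsum : (1 / 2 : ℝ) < ∑ x ∈ T, r x := by
      have h2 : ((1 : ℝ≥0∞) / 2).toReal < (∑ x ∈ T, μ x).toReal :=
        ENNReal.toReal_strict_mono hTfin hT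
      rwa [ENNReal.toReal_sum (fun a _ => hfin a), ENNReal.toReal_div] at h2 <;> try norm_num
    obtain ⟨n, hn⟩ := pow_unbounded_of_one_lt
      ((T.card : ℝ) / (2 * (∑ x ∈ T, r x) - 1)) (one_lt_two (α := ℝ))
    have hδ : (0 : ℝ) < 2 * (∑ x ∈ T, r x) - 1 := by
      linarith
    have hn' : (T.card : ℝ) ≤ 2 ^ n * (2 * (∑ x ∈ T, r x) - 1) := by
      rw [div_lt_iff₀ hδ] at hn
      linarith
    set c : X → ℕ := fun x => ⌈2 ^ (n + 1) * r x⌉₊ - 1 with hc_def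
    have hceil : ∀ x ∈ T, 1 ≤ ⌈2 ^ (n + 1) * r x⌉₊ := fun x hx =>
      Nat.one_le_ceil_iff.2 (mul_pos (pow_pos two_pos _) (hrpos x hx))
    have hccast : ∀ x ∈ T, (c x : ℝ) = (⌈2 ^ (n + 1) * r x⌉₊ : ℝ) - 1 := by
      intro x hx
      rw [hc_def]
      push_cast [Nat.cast_sub (hceil x hx)]
      ring
    have hc1 : ∀ x ∈ T, (c x : ℝ) < 2 ^ (n + 1) * r x := by
      intro x hx
      have := Nat.ceil_lt_add_one (mul_pos (pow_pos two_pos (n+1)) (hrpos x hx)).le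
      rw [hccast x hx]
      linarith
    have hc2 : ∀ x ∈ T, 2 ^ (n + 1) * r x - 1 ≤ (c x : ℝ) := by
      intro x hx
      have := Nat.le_ceil (2 ^ (n + 1) * r x)
      rw [hccast x hx]
      linarith
    have hcs : 2 ^ n ≤ ∑ x ∈ T, c x := by
      have key : (2 ^ n : ℝ) ≤ ∑ x ∈ T, (c x : ℝ) := by
        have h3 : ∑ x ∈ T, (2 ^ (n + 1) * r x - 1) ≤ ∑ x ∈ T, (c x : ℝ) :=
          Finset.sum_le_sum hc2
        have h4 : ∑ x ∈ T, (2 ^ (n + 1) * r x - 1)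
            = 2 ^ (n + 1) * (∑ x ∈ T, r x) - T.card := by
          rw [Finset.sum_sub_distrib, ← Finset.mul_sum]
          simp
        have h5 : (2 : ℝ) ^ (n + 1) = 2 ^ n * 2 := pow_succ 2 n
        nlinarith [hn']
      exact_mod_cast key
    obtain ⟨q, hq, hqs⟩ := greedy c T (2 ^ n) hcs
    set f : X → ℝ≥0∞ := fun x => if x ∈ T then (q x : ℝ≥0∞) / 2 ^ n else 0 with hf_def
    have hfsum : ∑' x, f x = 1 := by
      rw [tsum_eq_sum (s := T) (fun x hx => if_neg hx),
        Finset.sum_congr rfl fun x hx => if_pos hx]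
      simp only [div_eq_mul_inv, ← Finset.sum_mul]
      rw [← Nat.cast_sum, hqs]
      push_cast
      exact ENNReal.div_self (pow_ne_zero n two_ne_zero) (ENNReal.pow_ne_top ENNReal.ofNat_ne_top)
    refine ⟨⟨f, ENNReal.summable.hasSum_iff.2 hfsum⟩, ⟨?_, ?_⟩, ?_⟩
    · refine Set.Finite.subset T.finite_toSet ?_
      intro x hx
      change f x ≠ 0 at hx
      by_contra h
      exact hx (if_neg h)
    · intro x
      by_cases h : x ∈ T
      · exact ⟨q x, n, if_pos h⟩
      · refine ⟨0, 0, ?_⟩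
        show f x = _
        rw [show f x = (0:ℝ≥0∞) from if_neg h]
        simp
    · intro x hx
      have hxT : x ∈ T := by
        by_contra h
        exact hx (if_neg h)
      have hfx : f x = (q x : ℝ≥0∞) / 2 ^ n := if_pos hxT
      show f x / 2 < μ x
      rw [hfx]
      have hμ : μ x = ENNReal.ofReal (r x) := (ENNReal.ofReal_toReal (hfin x)).symm
      have hl : ((q x : ℝ≥0∞) / 2 ^ n / 2) = ENNReal.ofReal ((q x : ℝ) / 2 ^ n / 2) := by
        rw [ENNReal.ofReal_div_of_pos two_pos, ENNReal.ofReal_div_of_pos (pow_pos two_pos n),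
          ENNReal.ofReal_natCast, ENNReal.ofReal_pow (by norm_num : (0:ℝ) ≤ 2)]
        norm_num
      rw [hμ, hl]
      rw [ENNReal.ofReal_lt_ofReal_iff (hrpos x hxT)]
      rw [div_div, ← pow_succ, div_lt_iff₀ (pow_pos two_pos (n+1))]
      have hqc : (q x : ℝ) ≤ c x := by exact_mod_cast hq x
      have := hc1 x hxT
      linarith

lemma exists_step {X : Type} (μ : PMF X) :
    ∃ p : PMF X × PMF X, FinitaryDyadic p.1 ∧ (∀ x, p.1 x ≠ 0 → p.1 x / 2 < μ x) ∧
      (∀ x, p.2 x = 2 * (μ x - p.1 x / 2)) := by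
  obtain ⟨ν, hν, hlt⟩ := exists_dyadic μ
  have hle : ∀ x, ν x / 2 ≤ μ x := by
    intro x
    by_cases h : ν x = 0
    · simp [h]
    · exact (hlt x h).le
  have hsum : ∑' x, (2 * (μ x - ν x / 2)) = 1 := by
    have h2 : ∑' x, (ν x / 2) = 1 / 2 := by
      simp only [div_eq_mul_inv]
      rw [ENNReal.tsum_mul_right, ν.tsum_coe, one_mul]
    have hadd : ∑' x, ((μ x - ν x / 2) + ν x / 2) = 1 := by
      rw [tsum_congr (fun x => tsub_add_cancel_of_le (hle x)), μ.tsum_coe]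
    rw [ENNReal.tsum_add, h2] at hadd
    have h3 : ∑' x, (μ x - ν x / 2) = 1 - 1 / 2 :=
      ENNReal.eq_sub_of_add_eq (by norm_num) hadd
    rw [ENNReal.tsum_mul_left, h3]
    norm_num
    exact ENNReal.mul_inv_cancel two_ne_zero ENNReal.ofNat_ne_top
  exact ⟨(ν, ⟨fun x => 2 * (μ x - ν x / 2), ENNReal.summable.hasSum_iff.2 hsum⟩),
    hν, hlt, fun x => rfl⟩

noncomputable def remSeq {X : Type} (μ : PMF X) : ℕ → PMF X
  | 0 => μ
  | (i + 1) => (Classical.choose (exists_step (remSeq μ i))).2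

noncomputable def nuSeq {X : Type} (μ : PMF X) (i : ℕ) : PMF X :=
  (Classical.choose (exists_step (remSeq μ i))).1

lemma nuSeq_dyadic {X : Type} (μ : PMF X) (i : ℕ) : FinitaryDyadic (nuSeq μ i) :=
  (Classical.choose_spec (exists_step (remSeq μ i))).1

lemma nuSeq_lt {X : Type} (μ : PMF X) (i : ℕ) (x : X) (h : nuSeq μ i x ≠ 0) :
    nuSeq μ i x / 2 < remSeq μ i x :=
  (Classical.choose_spec (exists_step (remSeq μ i))).2.1 x h

lemma nuSeq_le {X : Type} (μ : PMF X) (i : ℕ) (x : X) :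
    nuSeq μ i x / 2 ≤ remSeq μ i x := by
  by_cases h : nuSeq μ i x = 0
  · simp [h]
  · exact (nuSeq_lt μ i x h).le

lemma remSeq_succ {X : Type} (μ : PMF X) (i : ℕ) (x : X) :
    remSeq μ (i + 1) x = 2 * (remSeq μ i x - nuSeq μ i x / 2) :=
  (Classical.choose_spec (exists_step (remSeq μ i))).2.2 x

lemma invariant {X : Type} (μ : PMF X) (i : ℕ) (x : X) :
    μ x = (∑ j ∈ Finset.range i, nuSeq μ j x / 2 ^ (j + 1)) + remSeq μ i x / 2 ^ i := by
  induction i with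
  | zero => simp [remSeq]
  | succ i ih =>
    rw [Finset.sum_range_succ]
    have hrec : remSeq μ (i + 1) x / 2 ^ (i + 1)
        = (remSeq μ i x - nuSeq μ i x / 2) / 2 ^ i := by
      rw [remSeq_succ, pow_succ, mul_comm (2 : ℝ≥0∞) _,
        ENNReal.mul_div_mul_right _ _ two_ne_zero ENNReal.ofNat_ne_top]
    have hsplit : nuSeq μ i x / 2 ^ (i + 1) = (nuSeq μ i x / 2) / 2 ^ i := by
      rw [pow_succ, mul_comm, div_eq_mul_inv, div_eq_mul_inv, div_eq_mul_inv,
        ENNReal.mul_inv (Or.inl two_ne_zero) (Or.inl ENNReal.ofNat_ne_top), ← mul_assoc]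
    rw [hrec, hsplit, ih, add_assoc, ← ENNReal.add_div,
      add_tsub_cancel_of_le (nuSeq_le μ i x)]

/-- Every countably supported probability distribution `μ` can be written as
`μ = Σ_{i≥1} 2^{-i} ν_i` with each `ν_i` finitary dyadic; moreover the `ν_i`
can be chosen so that at each stage `(1/2)ν_i` is strictly below the remaining
measure on the support of `ν_i`. -/
theorem pmf_dyadic_decomposition {X : Type} (μ : PMF X) :
    ∃ ν : ℕ → PMF X,
      (∀ i, FinitaryDyadic (ν i)) ∧
      (∀ x, μ x = ∑' i : ℕ, ν i x / 2 ^ (i + 1)) ∧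
      (∀ i x, x ∈ (ν i).support →
        ν i x / 2 < 2 ^ i *
          (μ x - ∑ j ∈ Finset.range i, ν j x / 2 ^ (j + 1))) := by
  refine ⟨fun i => nuSeq μ i, fun i => nuSeq_dyadic μ i, ?_, ?_⟩
  · intro x
    apply le_antisymm
    · apply ENNReal.le_of_forall_pos_le_add
      intro ε hε _
      obtain ⟨i, hi⟩ := ENNReal.exists_inv_two_pow_lt
        (show (ε : ℝ≥0∞) ≠ 0 by exact_mod_cast hε.ne')
      have hrem : remSeq μ i x / 2 ^ i ≤ 2⁻¹ ^ i := by
        calc remSeq μ i x / 2 ^ i ≤ 1 / 2 ^ i :=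
              ENNReal.div_le_div_right ((remSeq μ i).coe_le_one x) _
          _ = 2⁻¹ ^ i := by rw [one_div, ENNReal.inv_pow]
      calc μ x = (∑ j ∈ Finset.range i, nuSeq μ j x / 2 ^ (j + 1)) + remSeq μ i x / 2 ^ i :=
            invariant μ i x
        _ ≤ (∑' j, nuSeq μ j x / 2 ^ (j + 1)) + 2⁻¹ ^ i :=
            add_le_add (ENNReal.sum_le_tsum _) hrem
        _ ≤ (∑' j, nuSeq μ j x / 2 ^ (j + 1)) + ε := add_le_add le_rfl hi.le
    · rw [ENNReal.tsum_eq_iSup_nat]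
      apply iSup_le
      intro i
      rw [invariant μ i x]
      exact le_self_add
  · intro i x hx
    rw [PMF.mem_support_iff] at hx
    have hsle : (∑ j ∈ Finset.range i, nuSeq μ j x / 2 ^ (j + 1)) ≠ ∞ := by
      apply ne_top_of_le_ne_top (ne_top_of_le_ne_top ENNReal.one_ne_top (μ.coe_le_one x))
      rw [invariant μ i x]
      exact le_self_add
    have h1 : μ x - (∑ j ∈ Finset.range i, nuSeq μ j x / 2 ^ (j + 1))
        = remSeq μ i x / 2 ^ i := by
      rw [invariant μ i x]
      exact ENNReal.add_sub_cancel_left hsle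
    rw [h1, ENNReal.mul_div_cancel (pow_ne_zero i two_ne_zero)
      (ENNReal.pow_ne_top ENNReal.ofNat_ne_top)]
    exact nuSeq_lt μ i x hx
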